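/- arXiv:1601.00732 — 2 statements merged into one kernel-verified Lean document; each statement's English description precedes it below -/
import Mathlib

section
/- For any q ∈ L²([0,1], ℝⁿ), the curve β(t) = β(0) + ∫₀ᵗ q(s)‖q(s)‖ ds is absolutely continuous and its square-root velocity function equals q almost everywhere. -/
open MeasureTheory Set

def AbsolutelyContinuousOnIcc {E : Type*} [NormedAddCommGroup E]
    (f : ℝ → E) (a b : ℝ) : Prop :=
  ∀ ε > 0, ∃ δ > 0, ∀ s : Finset (ℝ × ℝ),
    (∀ p ∈ s, a ≤ p.1 ∧ p.1 ≤ p.2 ∧ p.2 ≤ b) →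
    ((s : Set (ℝ × ℝ)).Pairwise fun p q => Disjoint (Ioo p.1 p.2) (Ioo q.1 q.2)) →
    (∑ p ∈ s, (p.2 - p.1)) < δ → (∑ p ∈ s, ‖f p.2 - f p.1‖) < ε

/-- The square-root velocity function `q(t) = β'(t)/√‖β'(t)‖` (zero where `β'(t) = 0`). -/
noncomputable def srvf {n : ℕ} (β : ℝ → EuclideanSpace ℝ (Fin n)) :
    ℝ → EuclideanSpace ℝ (Fin n) :=
  fun t => (Real.sqrt ‖deriv β t‖)⁻¹ • deriv β t

section Aux

open Filter Topology

/-- Lebesgue differentiation theorem: the indefinite integral of an integrable function is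
differentiable a.e. with derivative the function itself. -/
lemma aux_deriv {E : Type*} [NormedAddCommGroup E] [NormedSpace ℝ E] [CompleteSpace E]
    (g : ℝ → E) (hg : Integrable g volume) :
    ∀ᵐ t ∂volume, HasDerivAt (fun u => ∫ s in (0:ℝ)..u, g s) (g t) t := by
  filter_upwards [IsUnifLocDoublingMeasure.ae_tendsto_average (μ := volume)
    hg.locallyIntegrable 1] with t ht
  have hii : ∀ a b : ℝ, IntervalIntegrable g volume a b := fun a b => hg.intervalIntegrable
  rw [hasDerivAt_iff_tendsto_slope]
  have hδ : Tendsto (fun y : ℝ => |y - t| / 2) (𝓝[≠] t) (𝓝[>] 0) := by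
    rw [tendsto_nhdsWithin_iff]
    constructor
    · have h1 : Tendsto (fun y : ℝ => |y - t| / 2) (𝓝 t) (𝓝 (|t - t| / 2)) := by
        exact (continuous_abs.comp (continuous_id.sub continuous_const)).div_const 2
          |>.continuousAt.tendsto
      simpa using h1.mono_left nhdsWithin_le_nhds
    · filter_upwards [self_mem_nhdsWithin] with y hy
      have : y - t ≠ 0 := sub_ne_zero.mpr hy
      have := abs_pos.mpr this
      exact mem_Ioi.mpr (by linarith)
  have hmem : ∀ᶠ y in 𝓝[≠] t, t ∈ Metric.closedBall ((t + y) / 2) (1 * (|y - t| / 2)) := by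
    filter_upwards with y
    simp only [Metric.mem_closedBall, Real.dist_eq, one_mul]
    rw [show t - (t + y) / 2 = (t - y) / 2 by ring, abs_div, abs_two, abs_sub_comm t y]
  have key := ht (fun y : ℝ => (t + y) / 2) (fun y : ℝ => |y - t| / 2) hδ hmem
  apply key.congr'
  filter_upwards [self_mem_nhdsWithin] with y hy
  have hyt : y ≠ t := hy
  have hslope : slope (fun u => ∫ s in (0:ℝ)..u, g s) t y
      = (y - t)⁻¹ • ∫ s in t..y, g s := by
    simp only [slope, vsub_eq_sub]
    rw [intervalIntegral.integral_interval_sub_left (hii 0 y) (hii 0 t)]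
  rcases (lt_or_gt_of_ne hyt) with h | h
  · -- y < t
    have hball : Metric.closedBall ((t + y) / 2) (|y - t| / 2) = Icc y t := by
      rw [Real.closedBall_eq_Icc, abs_of_nonpos (by linarith),
        show (t + y) / 2 - -(y - t) / 2 = y by ring, show (t + y) / 2 + -(y - t) / 2 = t by ring]
    rw [hball, setAverage_eq, hslope, Real.volume_real_Icc_of_le (by linarith)]
    rw [intervalIntegral.integral_symm, intervalIntegral.integral_of_le h.le,
      integral_Icc_eq_integral_Ioc, smul_neg, ← neg_smul]
    congr 1
    rw [neg_inv, neg_sub]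
  · -- t < y
    have hball : Metric.closedBall ((t + y) / 2) (|y - t| / 2) = Icc t y := by
      rw [Real.closedBall_eq_Icc, abs_of_nonneg (by linarith),
        show (t + y) / 2 - (y - t) / 2 = t by ring, show (t + y) / 2 + (y - t) / 2 = y by ring]
    rw [hball, setAverage_eq, hslope, Real.volume_real_Icc_of_le (by linarith),
      intervalIntegral.integral_of_le h.le,
      integral_Icc_eq_integral_Ioc]

end Aux

/-- For any `q ∈ L²([0,1], ℝⁿ)`, the curve `β(t) = β₀ + ∫₀ᵗ q(s)‖q(s)‖ ds` is absolutely
continuous on `[0,1]` and its square-root velocity function equals `q` almost everywhere. -/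
theorem srvf_surjective_onto_L2 {n : ℕ}
    (q : ℝ → EuclideanSpace ℝ (Fin n))
    (hq : MemLp q 2 (volume.restrict (Icc (0:ℝ) 1)))
    (β₀ : EuclideanSpace ℝ (Fin n))
    (β : ℝ → EuclideanSpace ℝ (Fin n))
    (hβ : ∀ t, β t = β₀ + ∫ s in (0:ℝ)..t, ‖q s‖ • q s) :
    AbsolutelyContinuousOnIcc β 0 1 ∧
      ∀ᵐ t ∂(volume.restrict (Icc (0:ℝ) 1)), srvf β t = q t := by
  set f : ℝ → EuclideanSpace ℝ (Fin n) := fun s => ‖q s‖ • q s with hf_def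
  have hf_meas : AEStronglyMeasurable f (volume.restrict (Icc (0:ℝ) 1)) :=
    hq.aestronglyMeasurable.norm.smul hq.aestronglyMeasurable
  have hf2 : Integrable (fun x => ‖q x‖ ^ ((2:ENNReal).toReal)) (volume.restrict (Icc (0:ℝ) 1)) :=
    hq.integrable_norm_rpow two_ne_zero ENNReal.ofNat_ne_top
  have hf_int : IntegrableOn f (Icc (0:ℝ) 1) volume := by
    refine hf2.mono' hf_meas (Filter.Eventually.of_forall fun x => ?_)
    simp only [hf_def, norm_smul, Real.norm_eq_abs, abs_norm]
    rw [ENNReal.toReal_ofNat, show ((2:ℝ)) = ((2:ℕ):ℝ) by norm_num, Real.rpow_natCast, sq]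
  set g : ℝ → EuclideanSpace ℝ (Fin n) := (Icc (0:ℝ) 1).indicator f with hg_def
  have hg : Integrable g volume := hf_int.integrable_indicator measurableSet_Icc
  have hii : ∀ a b : ℝ, IntervalIntegrable g volume a b := fun a b => hg.intervalIntegrable
  have hβB : ∀ t ∈ Icc (0:ℝ) 1, β t = β₀ + ∫ s in (0:ℝ)..t, g s := by
    intro t ht
    rw [hβ t]
    congr 1
    apply intervalIntegral.integral_congr
    intro s hs
    rw [uIcc_of_le ht.1] at hs
    have hsI : s ∈ Icc (0:ℝ) 1 := ⟨hs.1, hs.2.trans ht.2⟩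
    simp [hg_def, hf_def, Set.indicator_of_mem hsI]
  have htop : (∫⁻ x, ENNReal.ofReal ‖g x‖ ∂volume) ≠ ⊤ :=
    ((hasFiniteIntegral_iff_norm g).mp hg.2).ne
  constructor
  · -- Absolute continuity
    intro ε εpos
    obtain ⟨δ', δ'pos, hδ'⟩ := exists_pos_setLIntegral_lt_of_measure_lt htop
      (ε := ENNReal.ofReal ε) (ENNReal.ofReal_pos.mpr εpos).ne'
    refine ⟨(min δ' 1).toReal, ENNReal.toReal_pos (lt_min δ'pos zero_lt_one).ne'
      ((min_le_right _ _).trans_lt ENNReal.one_lt_top).ne, ?_⟩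
    intro s hmem hdisj hsum
    set U : Set ℝ := ⋃ p ∈ s, Ioo p.1 p.2 with hU_def
    have hμU : volume U < δ' := by
      calc volume U ≤ ∑ p ∈ s, volume (Ioo p.1 p.2) := measure_biUnion_finset_le _ _
        _ = ∑ p ∈ s, ENNReal.ofReal (p.2 - p.1) := by simp [Real.volume_Ioo]
        _ = ENNReal.ofReal (∑ p ∈ s, (p.2 - p.1)) :=
            (ENNReal.ofReal_sum_of_nonneg fun p hp => sub_nonneg.mpr (hmem p hp).2.1).symm
        _ < ENNReal.ofReal ((min δ' 1).toReal) :=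
            (ENNReal.ofReal_lt_ofReal_iff_of_nonneg
              (Finset.sum_nonneg fun p hp => sub_nonneg.mpr (hmem p hp).2.1)).mpr hsum
        _ ≤ min δ' 1 := ENNReal.ofReal_toReal_le
        _ ≤ δ' := min_le_left _ _
    have key := hδ' U hμU
    have hterm : ∀ p ∈ s, ‖β p.2 - β p.1‖
        ≤ (∫⁻ x in Ioo p.1 p.2, ENNReal.ofReal ‖g x‖ ∂volume).toReal := by
      intro p hp
      obtain ⟨h0, h12, h1⟩ := hmem p hp
      rw [hβB p.2 ⟨h0.trans h12, h1⟩, hβB p.1 ⟨h0, h12.trans h1⟩, add_sub_add_left_eq_sub,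
        intervalIntegral.integral_interval_sub_left (hii 0 p.2) (hii 0 p.1),
        intervalIntegral.integral_of_le h12]
      calc ‖∫ x in Ioc p.1 p.2, g x‖
          ≤ (∫⁻ x in Ioc p.1 p.2, ENNReal.ofReal ‖g x‖ ∂volume).toReal :=
            norm_integral_le_lintegral_norm g
        _ = (∫⁻ x in Ioo p.1 p.2, ENNReal.ofReal ‖g x‖ ∂volume).toReal := by
            rw [setLIntegral_congr Ioo_ae_eq_Ioc.symm]
    calc ∑ p ∈ s, ‖β p.2 - β p.1‖
        ≤ ∑ p ∈ s, (∫⁻ x in Ioo p.1 p.2, ENNReal.ofReal ‖g x‖ ∂volume).toReal :=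
          Finset.sum_le_sum hterm
      _ = (∑ p ∈ s, ∫⁻ x in Ioo p.1 p.2, ENNReal.ofReal ‖g x‖ ∂volume).toReal :=
          (ENNReal.toReal_sum fun p _ =>
            ((setLIntegral_le_lintegral _ _).trans_lt htop.lt_top).ne).symm
      _ = (∫⁻ x in U, ENNReal.ofReal ‖g x‖ ∂volume).toReal := by
          rw [lintegral_biUnion_finset hdisj fun p _ => measurableSet_Ioo]
      _ < ε := ENNReal.toReal_lt_of_lt_ofReal key
  · -- srvf β = q a.e.
    have hae1 : ∀ᵐ t ∂volume, t ∈ Ioo (0:ℝ) 1 → srvf β t = q t := by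
      filter_upwards [aux_deriv g hg] with t ht hIoo
      have htI : t ∈ Icc (0:ℝ) 1 := Ioo_subset_Icc_self hIoo
      have hBd : HasDerivAt (fun u => β₀ + ∫ s in (0:ℝ)..u, g s) (g t) t := ht.const_add β₀
      have hev : β =ᶠ[nhds t] fun u => β₀ + ∫ s in (0:ℝ)..u, g s := by
        filter_upwards [isOpen_Ioo.mem_nhds hIoo] with u hu
        exact hβB u (Ioo_subset_Icc_self hu)
      have hderiv : deriv β t = g t := (hBd.congr_of_eventuallyEq hev).deriv
      have hgt : g t = ‖q t‖ • q t := indicator_of_mem htI f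
      show (Real.sqrt ‖deriv β t‖)⁻¹ • deriv β t = q t
      rw [hderiv, hgt, norm_smul, Real.norm_eq_abs, abs_norm,
        Real.sqrt_mul_self (norm_nonneg _), smul_smul]
      rcases eq_or_ne (q t) 0 with h | h
      · simp [h]
      · rw [inv_mul_cancel₀ (norm_ne_zero_iff.mpr h), one_smul]
    have hae2 : ∀ᵐ t ∂(volume.restrict (Icc (0:ℝ) 1)), t ∈ Ioo (0:ℝ) 1 := by
      rw [ae_iff, Measure.restrict_apply]
      · refine measure_mono_null (fun a ha => ?_)
          (measure_union_null (μ := volume) (measure_singleton (0:ℝ)) (measure_singleton 1))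
        obtain ⟨hnot, haI⟩ := ha
        simp only [mem_setOf_eq, mem_Ioo, not_and_or, not_lt] at hnot
        rcases hnot with h | h
        · exact Or.inl (le_antisymm h haI.1)
        · exact Or.inr (le_antisymm haI.2 h)
      · exact (measurableSet_Ioo (a := (0:ℝ)) (b := 1)).compl
    exact (ae_restrict_of_ae hae1).mp (hae2.mono fun t h1 h2 => h2 h1)
end

section
/- Let A ∈ ℝ^{m×n} have SVD A = U Σ Vᵀ and τ > 0. Then the matrix S_τ(A) = U diag(max(σ_i − τ, 0)) Vᵀ is the unique minimizer of the function W ↦ τ‖W‖_* + ½‖W − A‖_F², where ‖·‖_* is the nuclear norm and ‖·‖_F the Frobenius norm. -/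
/-- The nuclear norm of a real matrix: the sum of its singular values. -/
noncomputable def nuclearNorm {m n : ℕ} (A : Matrix (Fin m) (Fin n) ℝ) : ℝ :=
  ∑ i, Real.sqrt (((by simpa only [Matrix.conjTranspose_eq_transpose_of_trivial] using
    Matrix.isHermitian_conjTranspose_mul_self A : (A.transpose * A).IsHermitian)).eigenvalues i)

open Matrix
open scoped MatrixOrder


lemma sum_dite_nat {k l : ℕ} (i : Fin k) (f : Fin l → ℝ) :
    ∑ j : Fin l, (if (i : ℕ) = (j : ℕ) then f j else 0)
      = if h : (i : ℕ) < l then f ⟨i, h⟩ else 0 := by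
  by_cases h : (i : ℕ) < l
  · rw [dif_pos h, Finset.sum_eq_single (⟨(i : ℕ), h⟩ : Fin l)]
    · simp
    · intro j _ hj
      rw [if_neg]
      intro hij
      exact hj (by exact Fin.ext hij.symm)
    · simp
  · rw [dif_neg h, Finset.sum_eq_zero]
    intro j _
    rw [if_neg]
    omega

lemma sum_dite_nat' {k l : ℕ} (j : Fin l) (f : Fin k → ℝ) :
    ∑ i : Fin k, (if (i : ℕ) = (j : ℕ) then f i else 0)
      = if h : (j : ℕ) < k then f ⟨j, h⟩ else 0 := by
  rw [show (fun i : Fin k => if (i : ℕ) = (j : ℕ) then f i else 0)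
      = (fun i : Fin k => if (j : ℕ) = (i : ℕ) then f i else 0) by
    funext i; simp [eq_comm]]
  exact sum_dite_nat j f

lemma sum_matched {m n : ℕ} (f : Fin m → Fin n → ℝ) :
    ∑ i : Fin m, ∑ j : Fin n, (if (i : ℕ) = (j : ℕ) then f i j else 0)
      = ∑ i : Fin m, (if h : (i : ℕ) < n then f i ⟨i, h⟩ else 0) :=
  Finset.sum_congr rfl fun i _ => sum_dite_nat i (f i)

lemma dsum_eq {m n : ℕ} (g : Fin n → ℝ) :
    ∑ i : Fin m, (if h : (i : ℕ) < n then g ⟨i, h⟩ else 0)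
      = ∑ j : Fin n, (if (j : ℕ) < m then g j else 0) := by
  rw [← sum_matched (fun i j => g j), Finset.sum_comm]
  refine Finset.sum_congr rfl fun j _ => ?_
  rw [sum_dite_nat' j (fun _ => g j)]
  split <;> simp


lemma trace_sqrt {k : ℕ} {B : Matrix (Fin k) (Fin k) ℝ} (hB : B.PosSemidef) :
    (CFC.sqrt B).trace = ∑ i, Real.sqrt (hB.1.eigenvalues i) := by
  rw [CFC.sqrt_eq_cfc, cfc_nnreal_eq_real _ B hB.nonneg, hB.1.cfc_eq, IsHermitian.cfc,
    Unitary.conjStarAlgAut_apply, Matrix.trace_mul_cycle,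
    Matrix.mem_unitaryGroup_iff'.mp hB.1.eigenvectorUnitary.2, one_mul, trace_diagonal]
  refine Finset.sum_congr rfl fun i _ => ?_
  simp [hB.eigenvalues_nonneg i]

lemma nsum_congr {k : ℕ} {B C : Matrix (Fin k) (Fin k) ℝ} (h : B = C) (hB : B.IsHermitian)
    (hC : C.IsHermitian) :
    ∑ i, Real.sqrt (hB.eigenvalues i) = ∑ i, Real.sqrt (hC.eigenvalues i) := by
  subst h; rfl

lemma nsum_conj {k : ℕ} {B : Matrix (Fin k) (Fin k) ℝ} (hB : B.PosSemidef)
    (Q : Matrix (Fin k) (Fin k) ℝ) (hQ1 : Q * Qᵀ = 1) (hQ2 : Qᵀ * Q = 1)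
    (hC : (Q * B * Qᵀ).PosSemidef) :
    ∑ i, Real.sqrt (hC.1.eigenvalues i) = ∑ i, Real.sqrt (hB.1.eigenvalues i) := by
  rw [← trace_sqrt hC, ← trace_sqrt hB]
  have hQH : Qᴴ = Qᵀ := Matrix.conjTranspose_eq_transpose_of_trivial Q
  have h1 : (Q * CFC.sqrt B * Qᵀ).PosSemidef := by
    have := (nonneg_iff_posSemidef.mp (CFC.sqrt_nonneg B)).mul_mul_conjTranspose_same Q
    rwa [hQH] at this
  have h2 : (Q * CFC.sqrt B * Qᵀ) ^ 2 = Q * B * Qᵀ := by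
    rw [pow_two]
    calc Q * CFC.sqrt B * Qᵀ * (Q * CFC.sqrt B * Qᵀ)
        = Q * CFC.sqrt B * (Qᵀ * Q) * CFC.sqrt B * Qᵀ := by noncomm_ring
      _ = Q * B * Qᵀ := by rw [hQ2, mul_one, mul_assoc Q, CFC.sqrt_mul_sqrt_self B hB.nonneg]
  rw [(CFC.sqrt_eq_iff _ _ hC.nonneg h1.nonneg).mpr (by rw [← pow_two]; exact h2), Matrix.trace_mul_cycle, hQ2, one_mul]

lemma nsum_diagonal {k : ℕ} (f : Fin k → ℝ) (hf : ∀ i, 0 ≤ f i)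
    (hD : (Matrix.diagonal f).PosSemidef) :
    ∑ i, Real.sqrt (hD.1.eigenvalues i) = ∑ i, Real.sqrt (f i) := by
  rw [← trace_sqrt hD]
  have h1 : (Matrix.diagonal fun i => Real.sqrt (f i)).PosSemidef :=
    Matrix.posSemidef_diagonal_iff.mpr fun i => Real.sqrt_nonneg _
  have h2 : (Matrix.diagonal fun i => Real.sqrt (f i)) ^ 2 = Matrix.diagonal f := by
    rw [pow_two, diagonal_mul_diagonal]
    have : (fun i => Real.sqrt (f i) * Real.sqrt (f i)) = f :=
      funext fun i => Real.mul_self_sqrt (hf i)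
    rw [this]
  rw [(CFC.sqrt_eq_iff _ _ hD.nonneg h1.nonneg).mpr (by rw [← pow_two]; exact h2), trace_diagonal]


lemma fro_eq_trace {m n : ℕ} (M : Matrix (Fin m) (Fin n) ℝ) :
    ∑ i, ∑ j, M i j ^ 2 = (Mᵀ * M).trace := by
  rw [Matrix.trace, Finset.sum_comm]
  refine Finset.sum_congr rfl fun j _ => ?_
  simp [Matrix.mul_apply, Matrix.diag, sq]

lemma fro_conj {m n : ℕ} {U : Matrix (Fin m) (Fin m) ℝ} {V : Matrix (Fin n) (Fin n) ℝ}
    (hU2 : Uᵀ * U = 1) (hV2 : Vᵀ * V = 1) (M : Matrix (Fin m) (Fin n) ℝ) :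
    ∑ i, ∑ j, (U * M * Vᵀ) i j ^ 2 = ∑ i, ∑ j, M i j ^ 2 := by
  rw [fro_eq_trace, fro_eq_trace]
  have h : (U * M * Vᵀ)ᵀ * (U * M * Vᵀ) = V * (Mᵀ * M) * Vᵀ := by
    rw [transpose_mul, transpose_mul, transpose_transpose]
    simp only [Matrix.mul_assoc]
    rw [← Matrix.mul_assoc Uᵀ U, hU2, Matrix.one_mul]
  rw [h, Matrix.trace_mul_cycle, hV2, one_mul]

lemma nuclearNorm_conj {m n : ℕ} {U : Matrix (Fin m) (Fin m) ℝ} {V : Matrix (Fin n) (Fin n) ℝ}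
    (hU2 : Uᵀ * U = 1) (hV1 : V * Vᵀ = 1) (hV2 : Vᵀ * V = 1) (M : Matrix (Fin m) (Fin n) ℝ) :
    nuclearNorm (U * M * Vᵀ) = nuclearNorm M := by
  have key : (U * M * Vᵀ)ᴴ * (U * M * Vᵀ) = V * (Mᴴ * M) * Vᵀ := by
    rw [conjTranspose_eq_transpose_of_trivial, conjTranspose_eq_transpose_of_trivial,
      transpose_mul, transpose_mul, transpose_transpose]
    simp only [Matrix.mul_assoc]
    rw [← Matrix.mul_assoc Uᵀ U, hU2, Matrix.one_mul]
  have hC : (V * (Mᴴ * M) * Vᵀ).PosSemidef := by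
    have := (posSemidef_conjTranspose_mul_self M).mul_mul_conjTranspose_same V
    rwa [conjTranspose_eq_transpose_of_trivial] at this
  rw [nuclearNorm, nuclearNorm]
  exact (nsum_congr key _ hC.1).trans
    (nsum_conj (posSemidef_conjTranspose_mul_self M) V hV1 hV2 hC)

lemma nuclearNorm_diag {m n : ℕ} (E : Matrix (Fin m) (Fin n) ℝ)
    (hE : ∀ (i : Fin m) (j : Fin n), (i : ℕ) ≠ (j : ℕ) → E i j = 0)
    (hEnn : ∀ (i : Fin m) (j : Fin n), (i : ℕ) = (j : ℕ) → 0 ≤ E i j) :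
    nuclearNorm E = ∑ j : Fin n, (if h : (j : ℕ) < m then E ⟨j, h⟩ j else 0) := by
  set g : Fin n → ℝ := fun j => if h : (j : ℕ) < m then E ⟨j, h⟩ j else 0 with hgdef
  have hg : ∀ j, 0 ≤ g j := by
    intro j
    rw [hgdef]
    dsimp only
    split
    · exact hEnn _ _ rfl
    · exact le_refl 0
  have key : Eᴴ * E = Matrix.diagonal (fun j => g j ^ 2) := by
    ext j j'
    rw [Matrix.mul_apply, Matrix.diagonal_apply]
    by_cases hjj : j = j'
    · subst hjj
      rw [if_pos rfl]
      have h1 : ∀ i : Fin m, Eᴴ j i * E i j = (if (i : ℕ) = (j : ℕ) then E i j ^ 2 else 0) := by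
        intro i
        by_cases h : (i : ℕ) = (j : ℕ)
        · simp [h, conjTranspose_apply, sq]
        · simp [hE i j h, conjTranspose_apply]
      rw [Finset.sum_congr rfl fun i _ => h1 i, sum_dite_nat' j (fun i => E i j ^ 2)]
      rw [hgdef]
      dsimp only
      split
      · rfl
      · simp
    · rw [if_neg hjj, Finset.sum_eq_zero]
      intro i _
      by_cases h : (i : ℕ) = (j : ℕ)
      · have : (i : ℕ) ≠ (j' : ℕ) := fun hc => hjj (Fin.ext (h.symm.trans hc))
        simp [hE i j' this]
      · simp [hE i j h, conjTranspose_apply]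
  have hD : (Matrix.diagonal (fun j => g j ^ 2)).PosSemidef :=
    Matrix.posSemidef_diagonal_iff.mpr fun j => sq_nonneg _
  rw [nuclearNorm]
  rw [nsum_congr (B := Eᵀ * E) key _ hD.1, nsum_diagonal _ (fun j => sq_nonneg _) hD]
  exact Finset.sum_congr rfl fun j _ => Real.sqrt_sq (hg j)


lemma cs_aux {m n : ℕ} (a : Fin m → ℝ) (b : Fin n → ℝ) (hapos : ∀ i, 0 ≤ a i)
    (hbpos : ∀ j, 0 ≤ b j) (ha : ∑ i, a i ^ 2 ≤ 1) (hb : ∑ j, b j ^ 2 ≤ 1) :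
    ∑ i : Fin m, ∑ j : Fin n, (if (i : ℕ) = (j : ℕ) then a i * b j else 0) ≤ 1 := by
  rw [sum_matched]
  set b' : Fin m → ℝ := fun i => if h : (i : ℕ) < n then b ⟨i, h⟩ else 0 with hb'def
  have h1 : ∑ i : Fin m, (if h : (i : ℕ) < n then a i * b ⟨i, h⟩ else 0)
      = ∑ i, a i * b' i := by
    refine Finset.sum_congr rfl fun i _ => ?_
    rw [hb'def]
    dsimp only
    split
    · rfl
    · rw [mul_zero]
  have hb'sq : ∑ i, b' i ^ 2 ≤ 1 := by
    have e : ∑ i, b' i ^ 2 = ∑ i : Fin m, (if h : (i : ℕ) < n then b ⟨i, h⟩ ^ 2 else 0) := by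
      refine Finset.sum_congr rfl fun i _ => ?_
      rw [hb'def]
      dsimp only
      split
      · rfl
      · exact zero_pow two_ne_zero
    rw [e, dsum_eq (fun j => b j ^ 2)]
    refine le_trans (Finset.sum_le_sum fun j _ => ?_) hb
    split
    · exact le_refl _
    · exact sq_nonneg _
  have cs := Finset.sum_mul_sq_le_sq_mul_sq Finset.univ a b'
  have h0 : (0:ℝ) ≤ ∑ i, a i * b' i := by
    refine Finset.sum_nonneg fun i _ => mul_nonneg (hapos i) ?_
    rw [hb'def]
    dsimp only
    split
    · exact hbpos _
    · exact le_refl _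
  have hasq : (0:ℝ) ≤ ∑ i, a i ^ 2 := Finset.sum_nonneg fun i _ => sq_nonneg _
  have hbsq : (0:ℝ) ≤ ∑ i, b' i ^ 2 := Finset.sum_nonneg fun i _ => sq_nonneg _
  rw [h1]
  nlinarith [cs, ha, hb'sq, h0, hasq, hbsq]

lemma diag_abs_le_nuclearNorm {m n : ℕ} (X : Matrix (Fin m) (Fin n) ℝ) :
    ∑ i : Fin m, ∑ j : Fin n, (if (i : ℕ) = (j : ℕ) then |X i j| else 0) ≤ nuclearNorm X := by
  classical
  unfold nuclearNorm
  set hB := Matrix.isHermitian_conjTranspose_mul_self X with hBdef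
  set lam : Fin n → ℝ := hB.eigenvalues with hlamdef
  have hlam : ∀ k, 0 ≤ lam k := fun k =>
    Matrix.eigenvalues_conjTranspose_mul_self_nonneg X k
  set Q : Matrix (Fin n) (Fin n) ℝ := (hB.eigenvectorUnitary : Matrix (Fin n) (Fin n) ℝ)
    with hQdef
  have hQmem := hB.eigenvectorUnitary.2
  have hT : Qᵀ = star Q := by
    rw [Matrix.star_eq_conjTranspose, conjTranspose_eq_transpose_of_trivial]
  have hQ1 : Q * Qᵀ = 1 := by
    rw [hT]
    exact Matrix.mem_unitaryGroup_iff.mp hQmem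
  have hQ2 : Qᵀ * Q = 1 := by
    rw [hT]
    exact Matrix.mem_unitaryGroup_iff'.mp hQmem
  have hSpec : Qᵀ * (Xᴴ * X) * Q = Matrix.diagonal lam := by
    rw [hT]
    have h := hB.conjStarAlgAut_star_eigenvectorUnitary
    rw [Unitary.conjStarAlgAut_apply, Unitary.coe_star, star_star] at h
    rw [hQdef, h]
    congr 1
  set c : Fin n → Fin m → ℝ := fun k i => (X * Q) i k with hcdef
  have hcnorm : ∀ k, ∑ i, c k i ^ 2 = lam k := by
    intro k
    have h : ((X * Q)ᵀ * (X * Q)) k k = lam k := by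
      have e : (X * Q)ᵀ * (X * Q) = Qᵀ * (Xᴴ * X) * Q := by
        rw [transpose_mul, conjTranspose_eq_transpose_of_trivial]
        simp only [Matrix.mul_assoc]
      rw [e, hSpec, Matrix.diagonal_apply_eq]
    rw [← h, Matrix.mul_apply]
    refine Finset.sum_congr rfl fun i _ => ?_
    rw [transpose_apply, sq]
  set u : Fin n → Fin m → ℝ :=
    fun k i => if lam k = 0 then 0 else c k i / Real.sqrt (lam k) with hudef
  have hrep_c : ∀ k i, c k i = Real.sqrt (lam k) * u k i := by
    intro k i
    by_cases hk : lam k = 0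
    · have h0 : ∑ i, c k i ^ 2 = 0 := by rw [hcnorm k, hk]
      have hci : c k i ^ 2 = 0 :=
        (Finset.sum_eq_zero_iff_of_nonneg fun i _ => sq_nonneg (c k i)).mp h0 i
          (Finset.mem_univ i)
      have : c k i = 0 := by
        have := sq_eq_zero_iff.mp hci
        exact this
      rw [this, hudef]
      simp [hk]
    · have hpos : 0 < lam k := lt_of_le_of_ne (hlam k) (Ne.symm hk)
      have hs : Real.sqrt (lam k) ≠ 0 := by positivity
      rw [hudef]
      dsimp only
      rw [if_neg hk]
      field_simp
  have hunorm : ∀ k, ∑ i, u k i ^ 2 ≤ 1 := by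
    intro k
    by_cases hk : lam k = 0
    · simp [hudef, hk]
    · have hpos : 0 < lam k := lt_of_le_of_ne (hlam k) (Ne.symm hk)
      have e : ∑ i, u k i ^ 2 = (∑ i, c k i ^ 2) / lam k := by
        rw [Finset.sum_div]
        refine Finset.sum_congr rfl fun i _ => ?_
        rw [hudef]
        dsimp only
        rw [if_neg hk, div_pow, Real.sq_sqrt hpos.le]
      rw [e, hcnorm k, div_self hk]
  have hqnorm : ∀ k, ∑ j, Q j k ^ 2 = 1 := by
    intro k
    have h : (Qᵀ * Q) k k = 1 := by rw [hQ2, Matrix.one_apply_eq]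
    rw [← h, Matrix.mul_apply]
    refine Finset.sum_congr rfl fun j _ => ?_
    rw [transpose_apply, sq]
  have hXrep : ∀ i j, X i j = ∑ k, Real.sqrt (lam k) * u k i * Q j k := by
    intro i j
    have hX : X = (X * Q) * Qᵀ := by rw [Matrix.mul_assoc, hQ1, Matrix.mul_one]
    conv_lhs => rw [hX]
    rw [Matrix.mul_apply]
    refine Finset.sum_congr rfl fun k _ => ?_
    rw [transpose_apply, ← hrep_c]
  have step1 : ∑ i : Fin m, ∑ j : Fin n, (if (i : ℕ) = (j : ℕ) then |X i j| else 0)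
      ≤ ∑ k, Real.sqrt (lam k) *
          (∑ i : Fin m, ∑ j : Fin n, (if (i : ℕ) = (j : ℕ) then |u k i| * |Q j k| else 0)) := by
    have hub : ∀ (i : Fin m) (j : Fin n), (if (i : ℕ) = (j : ℕ) then |X i j| else 0)
        ≤ ∑ k, (if (i : ℕ) = (j : ℕ) then Real.sqrt (lam k) * (|u k i| * |Q j k|) else 0) := by
      intro i j
      by_cases hc : (i : ℕ) = (j : ℕ)
      · simp only [if_pos hc]
        rw [hXrep i j]
        refine le_trans (Finset.abs_sum_le_sum_abs _ _) (Finset.sum_le_sum fun k _ => ?_)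
        rw [abs_mul, abs_mul, abs_of_nonneg (Real.sqrt_nonneg _), mul_assoc]
      · simp [hc]
    refine le_trans (Finset.sum_le_sum fun i _ => Finset.sum_le_sum fun j _ => hub i j) ?_
    have e1 : ∑ i : Fin m, ∑ j : Fin n, ∑ k : Fin n,
        (if (i : ℕ) = (j : ℕ) then Real.sqrt (lam k) * (|u k i| * |Q j k|) else 0)
        = ∑ k : Fin n, ∑ i : Fin m, ∑ j : Fin n,
        (if (i : ℕ) = (j : ℕ) then Real.sqrt (lam k) * (|u k i| * |Q j k|) else 0) := by
      rw [show (∑ i : Fin m, ∑ j : Fin n, ∑ k : Fin n,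
          (if (i : ℕ) = (j : ℕ) then Real.sqrt (lam k) * (|u k i| * |Q j k|) else 0))
          = ∑ i : Fin m, ∑ k : Fin n, ∑ j : Fin n,
          (if (i : ℕ) = (j : ℕ) then Real.sqrt (lam k) * (|u k i| * |Q j k|) else 0) from
        Finset.sum_congr rfl fun i _ => Finset.sum_comm ..]
      exact Finset.sum_comm ..
    rw [e1]
    refine le_of_eq (Finset.sum_congr rfl fun k _ => ?_)
    simp only [Finset.mul_sum, mul_ite, mul_zero]
  refine le_trans step1 ?_
  have step2 : ∀ k, Real.sqrt (lam k) *
      (∑ i : Fin m, ∑ j : Fin n, (if (i : ℕ) = (j : ℕ) then |u k i| * |Q j k| else 0))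
      ≤ Real.sqrt (lam k) := by
    intro k
    have hcs : ∑ i : Fin m, ∑ j : Fin n, (if (i : ℕ) = (j : ℕ) then |u k i| * |Q j k| else 0)
        ≤ 1 := by
      refine cs_aux _ _ (fun i => abs_nonneg _) (fun j => abs_nonneg _) ?_ ?_
      · simp only [sq_abs]
        exact hunorm k
      · simp only [sq_abs]
        exact le_of_eq (hqnorm k)
    have h0 : (0:ℝ) ≤ ∑ i : Fin m, ∑ j : Fin n,
        (if (i : ℕ) = (j : ℕ) then |u k i| * |Q j k| else 0) := by
      refine Finset.sum_nonneg fun i _ => Finset.sum_nonneg fun j _ => ?_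
      split
      · exact mul_nonneg (abs_nonneg _) (abs_nonneg _)
      · exact le_refl _
    calc Real.sqrt (lam k) * _ ≤ Real.sqrt (lam k) * 1 :=
          mul_le_mul_of_nonneg_left hcs (Real.sqrt_nonneg _)
      _ = Real.sqrt (lam k) := mul_one _
  exact le_trans (Finset.sum_le_sum fun k _ => step2 k) (le_of_eq rfl)


lemma scalar_key {t d x : ℝ} (ht : 0 < t) (hd : 0 ≤ d) :
    t * max (d - t) 0 + (1/2) * (max (d - t) 0 - d)^2 + (1/2) * (x - max (d - t) 0)^2
      ≤ t * |x| + (1/2) * (x - d)^2 := by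
  rcases le_total (d - t) 0 with h | h
  · rw [max_eq_right h]
    rcases abs_cases x with ⟨hx, _⟩ | ⟨hx, hx2⟩ <;> nlinarith
  · rw [max_eq_left h]
    rcases abs_cases x with ⟨hx, _⟩ | ⟨hx, hx2⟩ <;> nlinarith



/-- Singular value thresholding (Cai–Candès–Shen): if `A = U D Vᵀ` is an SVD of `A`
(`U, V` orthogonal, `D` rectangular-diagonal with nonnegative diagonal entries) and
`τ > 0`, then `S_τ(A) = U D_τ Vᵀ`, where `D_τ` soft-thresholds the diagonal of `D`,
is the unique minimizer of `W ↦ τ‖W‖_* + ½‖W − A‖_F²`. -/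
theorem singular_value_thresholding {m n : ℕ} (τ : ℝ) (hτ : 0 < τ)
    (A : Matrix (Fin m) (Fin n) ℝ)
    (U : Matrix (Fin m) (Fin m) ℝ) (hU : U ∈ Matrix.orthogonalGroup (Fin m) ℝ)
    (V : Matrix (Fin n) (Fin n) ℝ) (hV : V ∈ Matrix.orthogonalGroup (Fin n) ℝ)
    (D : Matrix (Fin m) (Fin n) ℝ)
    (hDdiag : ∀ (i : Fin m) (j : Fin n), (i : ℕ) ≠ (j : ℕ) → D i j = 0)
    (hDnonneg : ∀ (i : Fin m) (j : Fin n), (i : ℕ) = (j : ℕ) → 0 ≤ D i j)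
    (hA : A = U * D * V.transpose)
    (S : Matrix (Fin m) (Fin n) ℝ)
    (hS : S = U * (Matrix.of fun (i : Fin m) (j : Fin n) =>
      if (i : ℕ) = (j : ℕ) then max (D i j - τ) 0 else 0) * V.transpose) :
    (∀ W : Matrix (Fin m) (Fin n) ℝ,
        τ * nuclearNorm S + (1 / 2) * ∑ i, ∑ j, (S i j - A i j) ^ 2 ≤
          τ * nuclearNorm W + (1 / 2) * ∑ i, ∑ j, (W i j - A i j) ^ 2) ∧
      ∀ W : Matrix (Fin m) (Fin n) ℝ,
        τ * nuclearNorm W + (1 / 2) * ∑ i, ∑ j, (W i j - A i j) ^ 2 =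
          τ * nuclearNorm S + (1 / 2) * ∑ i, ∑ j, (S i j - A i j) ^ 2 → W = S := by
  classical
  set Dτ : Matrix (Fin m) (Fin n) ℝ := Matrix.of fun (i : Fin m) (j : Fin n) =>
      if (i : ℕ) = (j : ℕ) then max (D i j - τ) 0 else 0 with hDτdef
  have hDτ_apply : ∀ (i : Fin m) (j : Fin n),
      Dτ i j = if (i : ℕ) = (j : ℕ) then max (D i j - τ) 0 else 0 := fun i j => rfl
  have hStar : ∀ {k : ℕ} (M : Matrix (Fin k) (Fin k) ℝ), star M = Mᵀ := by
    intro k M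
    rw [Matrix.star_eq_conjTranspose, Matrix.conjTranspose_eq_transpose_of_trivial]
  have hU1 : U * Uᵀ = 1 := by
    have h := Matrix.mem_orthogonalGroup_iff (Fin m) ℝ |>.mp hU
    exact h
  have hU2 : Uᵀ * U = 1 := by
    have h := Matrix.mem_orthogonalGroup_iff' (Fin m) ℝ |>.mp hU
    exact h
  have hV1 : V * Vᵀ = 1 := by
    have h := Matrix.mem_orthogonalGroup_iff (Fin n) ℝ |>.mp hV
    exact h
  have hV2 : Vᵀ * V = 1 := by
    have h := Matrix.mem_orthogonalGroup_iff' (Fin n) ℝ |>.mp hV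
    exact h
  have hDτdiag : ∀ (i : Fin m) (j : Fin n), (i : ℕ) ≠ (j : ℕ) → Dτ i j = 0 := by
    intro i j h
    rw [hDτ_apply, if_neg h]
  have hDτnn : ∀ (i : Fin m) (j : Fin n), (i : ℕ) = (j : ℕ) → 0 ≤ Dτ i j := by
    intro i j h
    rw [hDτ_apply, if_pos h]
    exact le_max_right _ _
  -- value of the nuclear norm of S
  have hNS : nuclearNorm S
      = ∑ i : Fin m, ∑ j : Fin n, (if (i : ℕ) = (j : ℕ) then max (D i j - τ) 0 else 0) := by
    rw [hS, nuclearNorm_conj hU2 hV1 hV2, nuclearNorm_diag Dτ hDτdiag hDτnn,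
      sum_matched (fun i j => max (D i j - τ) 0)]
    have e1 : ∑ j : Fin n, (if h : (j : ℕ) < m then Dτ ⟨(j : ℕ), h⟩ j else 0)
        = ∑ j : Fin n, (if (j : ℕ) < m then
            (fun j' : Fin n => if h : (j' : ℕ) < m then Dτ ⟨(j' : ℕ), h⟩ j' else 0) j else 0) := by
      refine Finset.sum_congr rfl fun j _ => ?_
      by_cases h : (j : ℕ) < m
      · simp only [dif_pos h, if_pos h]
      · simp only [dif_neg h, if_neg h]
    rw [e1, ← dsum_eq (fun j' : Fin n => if h : (j' : ℕ) < m then Dτ ⟨(j' : ℕ), h⟩ j' else 0)]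
    refine Finset.sum_congr rfl fun i _ => ?_
    by_cases h : (i : ℕ) < n
    · rw [dif_pos h, dif_pos h]
      have hm : ((⟨(i : ℕ), h⟩ : Fin n) : ℕ) < m := i.isLt
      rw [dif_pos hm]
      have : (⟨((⟨(i : ℕ), h⟩ : Fin n) : ℕ), hm⟩ : Fin m) = i := by
        apply Fin.ext
        rfl
      rw [this, hDτ_apply, if_pos rfl]
    · rw [dif_neg h, dif_neg h]
  -- the master inequality
  have key : ∀ W : Matrix (Fin m) (Fin n) ℝ,
      τ * nuclearNorm S + (1 / 2) * ∑ i, ∑ j, (S i j - A i j) ^ 2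
        + (1 / 2) * ∑ i, ∑ j, (W i j - S i j) ^ 2 ≤
      τ * nuclearNorm W + (1 / 2) * ∑ i, ∑ j, (W i j - A i j) ^ 2 := by
    intro W
    set X : Matrix (Fin m) (Fin n) ℝ := Uᵀ * W * V with hXdef
    have hW : W = U * X * Vᵀ := by
      rw [hXdef,
        show U * (Uᵀ * W * V) * Vᵀ = (U * Uᵀ) * (W * (V * Vᵀ)) from by
          simp only [Matrix.mul_assoc],
        hU1, hV1, Matrix.one_mul, Matrix.mul_one]
    have hNW : nuclearNorm W = nuclearNorm X := by
      conv_lhs => rw [hW]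
      exact nuclearNorm_conj hU2 hV1 hV2 X
    have hsub : ∀ (P R : Matrix (Fin m) (Fin n) ℝ),
        U * P * Vᵀ - U * R * Vᵀ = U * (P - R) * Vᵀ := by
      intro P R
      rw [Matrix.mul_sub, Matrix.sub_mul]
    have hWA : W - A = U * (X - D) * Vᵀ := by
      rw [hA]
      conv_lhs => rw [hW]
      exact hsub X D
    have hWS : W - S = U * (X - Dτ) * Vᵀ := by
      rw [hS]
      conv_lhs => rw [hW]
      exact hsub X Dτ
    have hSA : S - A = U * (Dτ - D) * Vᵀ := by
      rw [hS, hA]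
      exact hsub Dτ D
    have froWA : ∑ i, ∑ j, (W i j - A i j) ^ 2 = ∑ i, ∑ j, ((X - D) i j) ^ 2 := by
      have : ∑ i, ∑ j, (W i j - A i j) ^ 2 = ∑ i, ∑ j, ((W - A) i j) ^ 2 := by
        simp only [Matrix.sub_apply]
      rw [this, hWA, fro_conj hU2 hV2]
    have froWS : ∑ i, ∑ j, (W i j - S i j) ^ 2 = ∑ i, ∑ j, ((X - Dτ) i j) ^ 2 := by
      have : ∑ i, ∑ j, (W i j - S i j) ^ 2 = ∑ i, ∑ j, ((W - S) i j) ^ 2 := by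
        simp only [Matrix.sub_apply]
      rw [this, hWS, fro_conj hU2 hV2]
    have froSA : ∑ i, ∑ j, (S i j - A i j) ^ 2 = ∑ i, ∑ j, ((Dτ - D) i j) ^ 2 := by
      have : ∑ i, ∑ j, (S i j - A i j) ^ 2 = ∑ i, ∑ j, ((S - A) i j) ^ 2 := by
        simp only [Matrix.sub_apply]
      rw [this, hSA, fro_conj hU2 hV2]
    rw [hNW, hNS, froWA, froWS, froSA]
    -- per-entry comparison
    have per : ∀ (i : Fin m) (j : Fin n),
        τ * (if (i : ℕ) = (j : ℕ) then max (D i j - τ) 0 else 0)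
          + (1/2) * ((Dτ - D) i j) ^ 2 + (1/2) * ((X - Dτ) i j) ^ 2
        ≤ τ * (if (i : ℕ) = (j : ℕ) then |X i j| else 0) + (1/2) * ((X - D) i j) ^ 2 := by
      intro i j
      rw [Matrix.sub_apply, Matrix.sub_apply, Matrix.sub_apply]
      by_cases hc : (i : ℕ) = (j : ℕ)
      · rw [if_pos hc, if_pos hc, hDτ_apply, if_pos hc]
        exact scalar_key hτ (hDnonneg i j hc)
      · rw [if_neg hc, if_neg hc, hDdiag i j hc, hDτ_apply, if_neg hc]
        nlinarith [sq_nonneg (X i j)]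
    have sum_per : ∑ i : Fin m, ∑ j : Fin n,
        (τ * (if (i : ℕ) = (j : ℕ) then max (D i j - τ) 0 else 0)
          + (1/2) * ((Dτ - D) i j) ^ 2 + (1/2) * ((X - Dτ) i j) ^ 2)
        ≤ ∑ i : Fin m, ∑ j : Fin n,
        (τ * (if (i : ℕ) = (j : ℕ) then |X i j| else 0) + (1/2) * ((X - D) i j) ^ 2) :=
      Finset.sum_le_sum fun i _ => Finset.sum_le_sum fun j _ => per i j
    have eL : ∑ i : Fin m, ∑ j : Fin n,
        (τ * (if (i : ℕ) = (j : ℕ) then max (D i j - τ) 0 else 0)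
          + (1/2) * ((Dτ - D) i j) ^ 2 + (1/2) * ((X - Dτ) i j) ^ 2)
        = τ * (∑ i : Fin m, ∑ j : Fin n, (if (i : ℕ) = (j : ℕ) then max (D i j - τ) 0 else 0))
          + (1/2) * ∑ i, ∑ j, ((Dτ - D) i j) ^ 2 + (1/2) * ∑ i, ∑ j, ((X - Dτ) i j) ^ 2 := by
      simp only [Finset.sum_add_distrib, ← Finset.mul_sum]
    have eR : ∑ i : Fin m, ∑ j : Fin n,
        (τ * (if (i : ℕ) = (j : ℕ) then |X i j| else 0) + (1/2) * ((X - D) i j) ^ 2)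
        = τ * (∑ i : Fin m, ∑ j : Fin n, (if (i : ℕ) = (j : ℕ) then |X i j| else 0))
          + (1/2) * ∑ i, ∑ j, ((X - D) i j) ^ 2 := by
      simp only [Finset.sum_add_distrib, ← Finset.mul_sum]
    have habs : τ * (∑ i : Fin m, ∑ j : Fin n, (if (i : ℕ) = (j : ℕ) then |X i j| else 0))
        ≤ τ * nuclearNorm X :=
      mul_le_mul_of_nonneg_left (diag_abs_le_nuclearNorm X) hτ.le
    calc τ * (∑ i : Fin m, ∑ j : Fin n, (if (i : ℕ) = (j : ℕ) then max (D i j - τ) 0 else 0))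
          + (1/2) * ∑ i, ∑ j, ((Dτ - D) i j) ^ 2 + (1/2) * ∑ i, ∑ j, ((X - Dτ) i j) ^ 2
        = ∑ i : Fin m, ∑ j : Fin n,
            (τ * (if (i : ℕ) = (j : ℕ) then max (D i j - τ) 0 else 0)
              + (1/2) * ((Dτ - D) i j) ^ 2 + (1/2) * ((X - Dτ) i j) ^ 2) := eL.symm
      _ ≤ ∑ i : Fin m, ∑ j : Fin n,
            (τ * (if (i : ℕ) = (j : ℕ) then |X i j| else 0) + (1/2) * ((X - D) i j) ^ 2) :=
          sum_per
      _ = τ * (∑ i : Fin m, ∑ j : Fin n, (if (i : ℕ) = (j : ℕ) then |X i j| else 0))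
            + (1/2) * ∑ i, ∑ j, ((X - D) i j) ^ 2 := eR
      _ ≤ τ * nuclearNorm X + (1/2) * ∑ i, ∑ j, ((X - D) i j) ^ 2 := by linarith
  constructor
  · intro W
    have h := key W
    have h2 : (0:ℝ) ≤ (1/2) * ∑ i, ∑ j, (W i j - S i j) ^ 2 := by
      have : (0:ℝ) ≤ ∑ i, ∑ j, (W i j - S i j) ^ 2 :=
        Finset.sum_nonneg fun i _ => Finset.sum_nonneg fun j _ => sq_nonneg _
      linarith
    linarith
  · intro W hEq
    have h := key W
    have hnn : (0:ℝ) ≤ ∑ i, ∑ j, (W i j - S i j) ^ 2 :=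
      Finset.sum_nonneg fun i _ => Finset.sum_nonneg fun j _ => sq_nonneg _
    have h0 : ∑ i, ∑ j, (W i j - S i j) ^ 2 = 0 := by linarith
    ext i j
    have h1 : ∑ j, (W i j - S i j) ^ 2 = 0 :=
      (Finset.sum_eq_zero_iff_of_nonneg fun i _ =>
        Finset.sum_nonneg fun j _ => sq_nonneg _).mp h0 i (Finset.mem_univ i)
    have h2 : (W i j - S i j) ^ 2 = 0 :=
      (Finset.sum_eq_zero_iff_of_nonneg fun j _ => sq_nonneg _).mp h1 j (Finset.mem_univ j)
    have := sq_eq_zero_iff.mp h2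
    linarith [this]
end
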